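/- arXiv:2010.01381 — 2 statements merged into one kernel-verified Lean document; each statement's English description precedes it below -/
import Mathlib

section
/- Let a = t_0 < t_1 < … < t_n = b be a partition of [a, b] with maximum spacing τ = max_k (t_k − t_{k−1}), and let K ≥ 0. Let e : [a, b] → ℝ be twice continuously differentiable on [a, b], and suppose that on each open subinterval (t_{k−1}, t_k) the function e is four times differentiable with |e⁗(t)| ≤ K for all t in each open subinterval. Assume e(t_k) = 0 for all 0 ≤ k ≤ n, and e''(a) = e''(b) = 0. Then |e''(t_k)| ≤ (1/4)·K·τ² for every 0 ≤ k ≤ n. -/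
/-!
On a subinterval `[c, d]` of length `h` on which `e` vanishes at both ends, integrating
`(s - c) e''(s)` by parts gives `h e'(d)`. Since `|e⁗| ≤ K`, a convexity argument shows that `e''`
differs from its linear interpolant by at most `K/2 (s - c)(d - s)`, so
`e'(d) = h (e''(c)/6 + e''(d)/3)` up to `K h³/24`, and symmetrically at `c`. Eliminating `e'` at
an interior knot gives a three-term relation `h e''ₖ₋₁/6 + (h + h') e''ₖ/3 + h' e''ₖ₊₁/6 ≈ 0`
with error `K (h³ + h'³)/24 ≤ K τ² (h + h')/24`. At a knot where `|e''|` is maximal the diagonal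
term dominates, giving `(h + h') |e''ₖ|/6 ≤ K τ² (h + h')/24`; at the end knots `e''` vanishes.
-/

open Set Filter Topology intervalIntegral

noncomputable def linearInterp (f : ℝ → ℝ) (c d s : ℝ) : ℝ :=
  (f c * (d - s) + f d * (s - c)) / (d - c)

section LinearInterp

variable {f : ℝ → ℝ} {c d : ℝ}

lemma linearInterp_left (hcd : c ≠ d) : linearInterp f c d c = f c := by
  rw [linearInterp]
  field_simp [sub_ne_zero.2 hcd.symm]
  ring

lemma linearInterp_right (hcd : c ≠ d) : linearInterp f c d d = f d := by
  rw [linearInterp]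
  field_simp [sub_ne_zero.2 hcd.symm]
  ring

lemma linearInterp_neg : linearInterp (-f) c d = -linearInterp f c d := by
  ext s
  simp only [linearInterp, Pi.neg_apply]
  ring

lemma hasDerivAt_linearInterp (x : ℝ) :
    HasDerivAt (linearInterp f c d) ((f d - f c) / (d - c)) x := by
  refine ((((hasDerivAt_id x).const_sub d).const_mul (f c)).add
    (((hasDerivAt_id x).sub_const c).const_mul (f d)) |>.div_const (d - c)).congr_deriv ?_
  ring

@[fun_prop]
lemma continuous_linearInterp : Continuous (linearInterp f c d) := by
  unfold linearInterp
  fun_prop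

lemma sub_linearInterp_le {g g' g'' : ℝ → ℝ} {K : ℝ} (hcd : c < d)
    (hg : ContinuousOn g (Icc c d))
    (hg' : ∀ x ∈ Ioo c d, HasDerivAt g (g' x) x)
    (hg'' : ∀ x ∈ Ioo c d, HasDerivAt g' (g'' x) x)
    (hK : ∀ x ∈ Ioo c d, -K ≤ g'' x) {s : ℝ} (hs : s ∈ Icc c d) :
    g s - linearInterp g c d s ≤ K / 2 * ((s - c) * (d - s)) := by
  -- `ψ'' = g'' + K ≥ 0`, so `ψ` is convex, and it vanishes at `c` and `d`.
  set ψ : ℝ → ℝ := fun x => g x - linearInterp g c d x - K / 2 * ((x - c) * (d - x))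
  have hψ' : ∀ x ∈ Ioo c d,
      HasDerivAt ψ (g' x - (g d - g c) / (d - c) - K / 2 * (c + d - 2 * x)) x := by
    intro x hx
    have hq := ((hasDerivAt_id x).sub_const c).mul ((hasDerivAt_id x).const_sub d)
    refine (((hg' x hx).sub (hasDerivAt_linearInterp x)).sub
      (hq.const_mul (K / 2))).congr_deriv ?_
    simp only [id]
    ring
  have hψ'' : ∀ x ∈ Ioo c d, HasDerivAt
      (fun x => g' x - (g d - g c) / (d - c) - K / 2 * (c + d - 2 * x)) (g'' x + K) x := by
    intro x hx
    refine (((hg'' x hx).sub_const _).sub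
      ((((hasDerivAt_id x).const_mul 2).const_sub (c + d)).const_mul (K / 2))).congr_deriv ?_
    ring
  have hconvex : ConvexOn ℝ (Icc c d) ψ :=
    convexOn_of_hasDerivWithinAt2_nonneg (convex_Icc c d) (by fun_prop)
      (by rw [interior_Icc]; exact fun x hx => (hψ' x hx).hasDerivWithinAt)
      (by rw [interior_Icc]; exact fun x hx => (hψ'' x hx).hasDerivWithinAt)
      (by rw [interior_Icc]; exact fun x hx => by linarith [hK x hx])
  have hψc : ψ c = 0 := by simp [ψ, linearInterp_left hcd.ne]
  have hψd : ψ d = 0 := by simp [ψ, linearInterp_right hcd.ne]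
  have hψs := hconvex.le_on_segment (left_mem_Icc.2 hcd.le) (right_mem_Icc.2 hcd.le)
    (by rwa [segment_eq_Icc hcd.le])
  rw [hψc, hψd, max_self] at hψs
  change g s - linearInterp g c d s - K / 2 * ((s - c) * (d - s)) ≤ 0 at hψs
  linarith

lemma abs_sub_linearInterp_le {g g' g'' : ℝ → ℝ} {K : ℝ} (hcd : c < d)
    (hg : ContinuousOn g (Icc c d))
    (hg' : ∀ x ∈ Ioo c d, HasDerivAt g (g' x) x)
    (hg'' : ∀ x ∈ Ioo c d, HasDerivAt g' (g'' x) x)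
    (hK : ∀ x ∈ Ioo c d, |g'' x| ≤ K) {s : ℝ} (hs : s ∈ Icc c d) :
    |g s - linearInterp g c d s| ≤ K / 2 * ((s - c) * (d - s)) := by
  refine abs_le.2
    ⟨?_, sub_linearInterp_le hcd hg hg' hg'' (fun x hx => (abs_le.1 (hK x hx)).1) hs⟩
  have hneg := sub_linearInterp_le (g := -g) (g' := -g') (g'' := -g'') hcd hg.neg
    (fun x hx => (hg' x hx).neg) (fun x hx => (hg'' x hx).neg)
    (fun x hx => by simpa using (abs_le.1 (hK x hx)).2) hs
  rw [linearInterp_neg] at hneg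
  simp only [Pi.neg_apply] at hneg
  linarith

lemma integral_sub_mul_linearInterp :
    ∫ s in c..d, (s - c) * linearInterp f c d s = (d - c) ^ 2 * (f c / 6 + f d / 3) := by
  rcases eq_or_ne c d with rfl | hcd
  · simp
  have hpoly : ∀ s, (s - c) * linearInterp f c d s
      = f c * (s - c) + (f d - f c) / (d - c) * (s - c) ^ 2 := by
    intro s
    rw [linearInterp]
    field_simp [sub_ne_zero.2 hcd.symm]
    ring
  simp only [hpoly]
  rw [integral_comp_sub_right (fun x => f c * x + (f d - f c) / (d - c) * x ^ 2), integral_add,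
    integral_const_mul, integral_const_mul]
  · simp
    field_simp [sub_ne_zero.2 hcd.symm]
    ring
  all_goals exact Continuous.intervalIntegrable (by fun_prop) _ _

end LinearInterp

lemma integral_sub_mul_sub_mul_sub (c d : ℝ) :
    ∫ s in c..d, (s - c) * ((s - c) * (d - s)) = (d - c) ^ 4 / 12 := by
  have hpoly : ∀ s, (s - c) * ((s - c) * (d - s)) = (d - c) * (s - c) ^ 2 - (s - c) ^ 3 := by
    intro s
    ring
  simp only [hpoly]
  rw [integral_comp_sub_right (fun x => (d - c) * x ^ 2 - x ^ 3)]
  simp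
  ring

lemma integral_sub_mul_eq_of_hasDerivAt {g g' g'' : ℝ → ℝ} {c d : ℝ} (hcd : c ≤ d)
    (hg : ContinuousOn g (Icc c d)) (hg'c : ContinuousOn g' (Icc c d))
    (hg''c : ContinuousOn g'' (Icc c d))
    (hg' : ∀ x ∈ Ioo c d, HasDerivAt g (g' x) x)
    (hg'' : ∀ x ∈ Ioo c d, HasDerivAt g' (g'' x) x) :
    ∫ s in c..d, (s - c) * g'' s = (d - c) * g' d - (g d - g c) := by
  rw [integral_eq_sub_of_hasDerivAt_of_le (f := fun s => (s - c) * g' s - g s)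
    (f' := fun s => (s - c) * g'' s) hcd
    (((continuousOn_id.sub continuousOn_const).mul hg'c).sub hg)
    (fun x hx => by
      refine ((((hasDerivAt_id x).sub_const c).mul (hg'' x hx)).sub (hg' x hx)).congr_deriv ?_
      simp only [id]
      ring)
    (((continuousOn_id.sub continuousOn_const).mul hg''c).intervalIntegrable_of_Icc hcd)]
  ring

structure HasBoundedFourthDerivOn (D : ℕ → ℝ → ℝ) (K c d : ℝ) : Prop where
  continuousOn : ∀ i ≤ 2, ContinuousOn (D i) (Icc c d)
  hasDerivAt : ∀ i < 4, ∀ x ∈ Ioo c d, HasDerivAt (D i) (D (i + 1) x) x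
  abs_le : ∀ x ∈ Ioo c d, |D 4 x| ≤ K

namespace HasBoundedFourthDerivOn

variable {D : ℕ → ℝ → ℝ} {K c d : ℝ}

lemma reflect (h : HasBoundedFourthDerivOn D K c d) :
    HasBoundedFourthDerivOn (fun i x => (-1) ^ i * D i (c + d - x)) K c d := by
  have hmaps : MapsTo (fun x => c + d - x) (Icc c d) (Icc c d) :=
    fun x hx => ⟨by linarith [hx.2], by linarith [hx.1]⟩
  have hmem : ∀ x ∈ Ioo c d, c + d - x ∈ Ioo c d :=
    fun x hx => ⟨by linarith [hx.2], by linarith [hx.1]⟩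
  refine ⟨fun i hi => ?_, fun i hi x hx => ?_, fun x hx => ?_⟩
  · exact ((h.continuousOn i hi).comp (by fun_prop) hmaps).const_mul _
  · refine (((h.hasDerivAt i hi _ (hmem x hx)).comp_const_sub (c + d) x).const_mul
      ((-1) ^ i)).congr_deriv ?_
    ring
  · simpa using h.abs_le _ (hmem x hx)

lemma abs_deriv_right_sub_le (h : HasBoundedFourthDerivOn D K c d) (hcd : c < d)
    (hc : D 0 c = 0) (hd : D 0 d = 0) :
    |D 1 d - (d - c) * (D 2 c / 6 + D 2 d / 3)| ≤ K * (d - c) ^ 3 / 24 := by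
  have hpos : 0 < d - c := sub_pos.2 hcd
  have hparts : ∫ s in c..d, (s - c) * D 2 s = (d - c) * D 1 d := by
    rw [integral_sub_mul_eq_of_hasDerivAt hcd.le (h.continuousOn 0 (by norm_num))
      (h.continuousOn 1 (by norm_num)) (h.continuousOn 2 le_rfl)
      (h.hasDerivAt 0 (by norm_num)) (h.hasDerivAt 1 (by norm_num)), hc, hd]
    ring
  have hsplit : (d - c) * (D 1 d - (d - c) * (D 2 c / 6 + D 2 d / 3))
      = ∫ s in c..d, (s - c) * (D 2 s - linearInterp (D 2) c d s) := by
    simp only [mul_sub]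
    rw [integral_sub, hparts, integral_sub_mul_linearInterp]
    · ring
    · exact ((continuousOn_id.sub continuousOn_const).mul
        (h.continuousOn 2 le_rfl)).intervalIntegrable_of_Icc hcd.le
    · exact Continuous.intervalIntegrable (by fun_prop) _ _
  have herr : ∀ s ∈ Ioc c d, ‖(s - c) * (D 2 s - linearInterp (D 2) c d s)‖
      ≤ K / 2 * ((s - c) * ((s - c) * (d - s))) := by
    intro s hs
    have hsc : 0 ≤ s - c := by linarith [hs.1]
    rw [Real.norm_eq_abs, abs_mul, abs_of_nonneg hsc, mul_left_comm]
    exact mul_le_mul_of_nonneg_left (abs_sub_linearInterp_le hcd (h.continuousOn 2 le_rfl)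
      (h.hasDerivAt 2 (by norm_num)) (h.hasDerivAt 3 (by norm_num)) h.abs_le
      (Ioc_subset_Icc_self hs)) hsc
  refine le_of_mul_le_mul_left ?_ hpos
  calc (d - c) * |D 1 d - (d - c) * (D 2 c / 6 + D 2 d / 3)|
      = ‖∫ s in c..d, (s - c) * (D 2 s - linearInterp (D 2) c d s)‖ := by
        rw [← hsplit, Real.norm_eq_abs, abs_mul, abs_of_pos hpos]
    _ ≤ ∫ s in c..d, K / 2 * ((s - c) * ((s - c) * (d - s))) :=
        norm_integral_le_of_norm_le hcd.le (MeasureTheory.ae_of_all _ herr)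
          (Continuous.intervalIntegrable (by fun_prop) _ _)
    _ = (d - c) * (K * (d - c) ^ 3 / 24) := by
        rw [integral_const_mul, integral_sub_mul_sub_mul_sub]
        ring

lemma abs_deriv_left_add_le (h : HasBoundedFourthDerivOn D K c d) (hcd : c < d)
    (hc : D 0 c = 0) (hd : D 0 d = 0) :
    |D 1 c + (d - c) * (D 2 c / 3 + D 2 d / 6)| ≤ K * (d - c) ^ 3 / 24 := by
  have := h.reflect.abs_deriv_right_sub_le hcd (by simpa using hd) (by simpa using hc)
  rw [← abs_neg]
  convert this using 2
  simp
  ring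

end HasBoundedFourthDerivOn

lemma abs_le_of_knot_estimates {a m b E h h' K τ : ℝ} (hh : 0 < h) (hh' : 0 < h')
    (hhτ : h ≤ τ) (hh'τ : h' ≤ τ) (hK : 0 ≤ K) (ha : |a| ≤ |m|) (hb : |b| ≤ |m|)
    (hleft : |E - h * (a / 6 + m / 3)| ≤ K * h ^ 3 / 24)
    (hright : |E + h' * (m / 3 + b / 6)| ≤ K * h' ^ 3 / 24) :
    |m| ≤ 1 / 4 * K * τ ^ 2 := by
  set X := h * a / 6 + (h + h') * m / 3 + h' * b / 6
  have hrelation : |X| ≤ K * (h ^ 3 + h' ^ 3) / 24 :=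
    calc |X| = |(E + h' * (m / 3 + b / 6)) - (E - h * (a / 6 + m / 3))| := by
          congr 1; ring
      _ ≤ _ := abs_sub _ _
      _ ≤ _ := by linarith
  have hdominant : (h + h') * |m| / 3 ≤ |X| + (h * |a| + h' * |b|) / 6 :=
    calc (h + h') * |m| / 3 = |X - (h * a / 6 + h' * b / 6)| := by
          rw [show X - (h * a / 6 + h' * b / 6) = (h + h') / 3 * m by ring, abs_mul,
            abs_of_pos (by linarith : (0 : ℝ) < (h + h') / 3)]
          ring
      _ ≤ |X| + (|h * a / 6| + |h' * b / 6|) :=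
          (abs_sub _ _).trans (by gcongr; exact abs_add_le _ _)
      _ = |X| + (h * |a| + h' * |b|) / 6 := by
          simp only [abs_div, abs_mul, abs_of_pos hh, abs_of_pos hh',
            abs_of_pos (by norm_num : (0 : ℝ) < 6)]
          ring
  have hcube : h ^ 3 + h' ^ 3 ≤ τ ^ 2 * (h + h') := by
    nlinarith [pow_le_pow_left₀ hh.le hhτ 2, pow_le_pow_left₀ hh'.le hh'τ 2]
  have hscaled : (h + h') * |m| ≤ (h + h') * (1 / 4 * K * τ ^ 2) := by
    nlinarith [mul_le_mul_of_nonneg_left ha hh.le, mul_le_mul_of_nonneg_left hb hh'.le]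
  exact le_of_mul_le_mul_left hscaled (by positivity)

section IteratedDerivWithin

variable {𝕜 F : Type*} [NontriviallyNormedField 𝕜] [NormedAddCommGroup F] [NormedSpace 𝕜 F]
  {f : 𝕜 → F} {s : Set 𝕜} {x : 𝕜}

lemma iteratedDerivWithin_of_mem_nhds (n : ℕ) (hs : s ∈ 𝓝 x) :
    iteratedDerivWithin n f s x = deriv^[n] f x := by
  rw [← iteratedDeriv_eq_iterate, ← iteratedDerivWithin_univ]
  simp only [iteratedDerivWithin]
  rw [← iteratedFDerivWithin_inter (s := univ) hs, univ_inter]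

lemma hasDerivAt_iteratedDerivWithin {n : ℕ} (hs : s ∈ 𝓝 x)
    (hf : DifferentiableAt 𝕜 (deriv^[n] f) x) :
    HasDerivAt (iteratedDerivWithin n f s) (iteratedDerivWithin (n + 1) f s x) x := by
  rw [iteratedDerivWithin_of_mem_nhds (n + 1) hs, Function.iterate_succ_apply']
  exact hf.hasDerivAt.congr_of_eventuallyEq
    ((eventually_mem_nhds_iff.2 hs).mono fun y hy => iteratedDerivWithin_of_mem_nhds n hy)

end IteratedDerivWithin

lemma hasBoundedFourthDerivOn_iteratedDerivWithin {e : ℝ → ℝ} {a b c d K : ℝ}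
    (hC2 : ContDiffOn ℝ 2 e (Icc a b)) (hcd : c < d) (hac : a ≤ c) (hdb : d ≤ b)
    (hsmooth : ∀ x ∈ Ioo c d,
      (∀ i < 4, DifferentiableAt ℝ (deriv^[i] e) x) ∧ |deriv^[4] e x| ≤ K) :
    HasBoundedFourthDerivOn (fun i => iteratedDerivWithin i e (Icc a b)) K c d := by
  have hsub : Icc c d ⊆ Icc a b := Icc_subset_Icc hac hdb
  have hnhds : ∀ x ∈ Ioo c d, Icc a b ∈ 𝓝 x := fun x hx =>
    mem_of_superset (Ioo_mem_nhds hx.1 hx.2) (Ioo_subset_Icc_self.trans hsub)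
  refine ⟨fun i hi => ?_, fun i hi x hx => ?_, fun x hx => ?_⟩
  · have hab : a < b := (hac.trans_lt hcd).trans_le hdb
    exact (hC2.continuousOn_iteratedDerivWithin (by exact_mod_cast hi)
      (uniqueDiffOn_Icc hab)).mono hsub
  · exact hasDerivAt_iteratedDerivWithin (hnhds x hx) ((hsmooth x hx).1 i hi)
  · rw [iteratedDerivWithin_of_mem_nhds 4 (hnhds x hx)]
    exact (hsmooth x hx).2

theorem hall_meyer_second_deriv_knot_bound_general (n : ℕ) (t : ℕ → ℝ)
    (ht : ∀ k, 1 ≤ k → k ≤ n → t (k - 1) < t k)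
    (τ : ℝ) (hτ : ∀ k, 1 ≤ k → k ≤ n → t k - t (k - 1) ≤ τ)
    (K : ℝ) (hK : 0 ≤ K) (e : ℝ → ℝ)
    (hC2 : ContDiffOn ℝ 2 e (Set.Icc (t 0) (t n)))
    (hdiff4 : ∀ k, 1 ≤ k → k ≤ n → ∀ s ∈ Set.Ioo (t (k - 1)) (t k),
      (∀ i < 4, DifferentiableAt ℝ (deriv^[i] e) s) ∧ |deriv^[4] e s| ≤ K)
    (hknots : ∀ k ≤ n, e (t k) = 0)
    (hbda : iteratedDerivWithin 2 e (Set.Icc (t 0) (t n)) (t 0) = 0)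
    (hbdb : iteratedDerivWithin 2 e (Set.Icc (t 0) (t n)) (t n) = 0) :
    ∀ k ≤ n, |iteratedDerivWithin 2 e (Set.Icc (t 0) (t n)) (t k)| ≤ (1 / 4) * K * τ ^ 2 := by
  set D : ℕ → ℝ → ℝ := fun i => iteratedDerivWithin i e (Icc (t 0) (t n))
  have hmono : StrictMonoOn t (Iic n) :=
    strictMonoOn_Iic_of_lt_succ fun m hm => by simpa using ht (m + 1) (by omega) hm
  have hstep : ∀ k < n, t k < t (k + 1) := fun k hk =>
    hmono (by simp; omega) (by simp; omega) (by omega)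
  have hpiece : ∀ k < n, HasBoundedFourthDerivOn D K (t k) (t (k + 1)) := fun k hk =>
    hasBoundedFourthDerivOn_iteratedDerivWithin hC2 (hstep k hk)
      (hmono.monotoneOn (by simp) (by simp; omega) (by omega))
      (hmono.monotoneOn (by simp; omega) (by simp) (by omega))
      fun x hx => hdiff4 (k + 1) (by omega) hk x (by simpa using hx)
  have hD0 : ∀ k ≤ n, D 0 (t k) = 0 := fun k hk => by simpa [D] using hknots k hk
  obtain ⟨j, hj, hjmax⟩ := (Finset.range (n + 1)).exists_max_image (fun k => |D 2 (t k)|)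
    ⟨0, by simp⟩
  intro k hk
  refine (hjmax k (by simp; omega)).trans ?_
  rcases Nat.eq_zero_or_pos j with rfl | hj0
  · rw [show D 2 (t 0) = 0 from hbda, abs_zero]
    positivity
  rcases (Nat.lt_succ_iff.1 (Finset.mem_range.1 hj)).eq_or_lt with rfl | hjn
  · rw [show D 2 (t j) = 0 from hbdb, abs_zero]
    positivity
  obtain ⟨i, rfl⟩ : ∃ i, j = i + 1 := ⟨j - 1, by omega⟩
  exact abs_le_of_knot_estimates (sub_pos.2 (hstep i (by omega))) (sub_pos.2 (hstep (i + 1) hjn))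
    (by simpa using hτ (i + 1) (by omega) (by omega)) (by simpa using hτ (i + 2) (by omega) hjn)
    hK (hjmax i (by simp; omega)) (hjmax (i + 2) (by simp; omega))
    ((hpiece i (by omega)).abs_deriv_right_sub_le (hstep i (by omega)) (hD0 i (by omega))
      (hD0 (i + 1) (by omega)))
    ((hpiece (i + 1) hjn).abs_deriv_left_add_le (hstep (i + 1) hjn) (hD0 (i + 1) (by omega))
      (hD0 (i + 2) hjn))

/-- Hall–Meyer Lemma, r = 2 case: if `e` is `C²` on `[a,b] = [t_0, t_n]`,
four times differentiable with `|e⁗| ≤ K` on each open subinterval of the partition,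
vanishes at all knots, and satisfies the natural boundary condition `e''(a) = e''(b) = 0`,
then `|e''(t_k)| ≤ (1/4)·K·τ²` at every knot, where `τ` bounds the knot spacings. -/
theorem hall_meyer_second_deriv_knot_bound (n : ℕ) (hn : 1 ≤ n) (t : ℕ → ℝ)
    (ht : ∀ k, 1 ≤ k → k ≤ n → t (k - 1) < t k)
    (τ : ℝ) (hτ : ∀ k, 1 ≤ k → k ≤ n → t k - t (k - 1) ≤ τ)
    (K : ℝ) (hK : 0 ≤ K) (e : ℝ → ℝ)
    (hC2 : ContDiffOn ℝ 2 e (Set.Icc (t 0) (t n)))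
    (hdiff4 : ∀ k, 1 ≤ k → k ≤ n → ∀ s ∈ Set.Ioo (t (k - 1)) (t k),
      (∀ i < 4, DifferentiableAt ℝ (deriv^[i] e) s) ∧ |deriv^[4] e s| ≤ K)
    (hknots : ∀ k ≤ n, e (t k) = 0)
    (hbda : iteratedDerivWithin 2 e (Set.Icc (t 0) (t n)) (t 0) = 0)
    (hbdb : iteratedDerivWithin 2 e (Set.Icc (t 0) (t n)) (t n) = 0) :
    ∀ k ≤ n, |iteratedDerivWithin 2 e (Set.Icc (t 0) (t n)) (t k)| ≤ (1 / 4) * K * τ ^ 2 :=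
  hall_meyer_second_deriv_knot_bound_general n t ht τ hτ K hK e hC2 hdiff4 hknots hbda hbdb
end

section
/- Let a = t_0 < t_1 < … < t_n = b be a partition of [a, b] with maximum spacing τ = max_k (t_k − t_{k−1}), and let K ≥ 0. Let x : [a, b] → ℝ, o : [a, b] → ℝ, and let c : [a, b] → ℝ be piecewise cubic: on each [t_{k−1}, t_k], c agrees with a polynomial of degree at most 3. Set ô = o + c and e = x − ô. Assume: (i) e is twice continuously differentiable on [a, b]; (ii) on each open subinterval (t_{k−1}, t_k), x − o is four times differentiable with |(x − o)⁗(t)| ≤ K; (iii) e(t_k) = 0 for all 0 ≤ k ≤ n; (iv) e''(a) = e''(b) = 0. Then |x'(t) − ô'(t)| ≤ (1/12)·K·τ³ for all t ∈ [a, b]. -/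
/-!
On each piece `[t_{j-1}, t_j]` of width `h` the error `e` vanishes at both knots and
`e⁗ = (x - o)⁗` is bounded by `K`. Subtracting the cubic Hermite interpolant of the knot slopes
leaves a function with double zeros at both ends, and repeated Rolle arguments bound its first
derivative by `K h³ / 24` and its second derivative at the two knots by `K h² / 12`. Since `e''` is
continuous at the interior knots and vanishes at `a` and `b`, the second of these bounds is a
diagonally dominant tridiagonal system for the knot slopes, whose largest entry is therefore at
most `K τ³ / 24`. The derivative of the Hermite cubic is bounded by its larger end slope, so
`|e'| ≤ K τ³ / 24 + K τ³ / 24`.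
-/

open Set Polynomial
open scoped Finset Nat

theorem exists_finset_hasDerivAt_eq_zero {f f' : ℝ → ℝ} {a b : ℝ}
    (hf : ContinuousOn f (Icc a b)) (hf' : ∀ x ∈ Ioo a b, HasDerivAt f (f' x) x)
    {S : Finset ℝ} (hS : ↑S ⊆ Icc a b) (hz : ∀ x ∈ S, f x = 0) :
    ∃ T : Finset ℝ, ↑T ⊆ Ioo a b ∧ #S ≤ #T + 1 ∧ ∀ x ∈ T, f' x = 0 := by
  classical
  induction S using Finset.induction_on_max generalizing b with
  | empty => exact ⟨∅, by simp, by simp, by simp⟩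
  | insert c S hlt ih =>
    rcases S.eq_empty_or_nonempty with rfl | hne
    · exact ⟨∅, by simp, by simp, by simp⟩
    have hcS : ∀ y ∈ insert c S, y ∈ Icc a b := fun y hy => hS hy
    set m := S.max' hne
    have hmS : m ∈ S := S.max'_mem hne
    have hmc : m < c := hlt m hmS
    have hcb : c ≤ b := (hcS c (Finset.mem_insert_self c S)).2
    have ham : a ≤ m := (hcS m (Finset.mem_insert_of_mem hmS)).1
    -- Rolle on `[max S, c]`, to the right of the zeros of `f'` found for `S` on `[a, max S]`
    obtain ⟨T, hTa, hTcard, hTz⟩ := ih (hf.mono (Icc_subset_Icc_right (hmc.le.trans hcb)))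
      (fun x hx => hf' x ⟨hx.1, hx.2.trans_le (hmc.le.trans hcb)⟩)
      (fun x hx => ⟨(hcS x (Finset.mem_insert_of_mem hx)).1, S.le_max' x hx⟩)
      (fun x hx => hz x (Finset.mem_insert_of_mem hx))
    obtain ⟨ζ, hζ, hζz⟩ := exists_hasDerivAt_eq_zero hmc
      (hf.mono (Icc_subset_Icc ham hcb))
      (by rw [hz m (Finset.mem_insert_of_mem hmS), hz c (Finset.mem_insert_self c S)])
      (fun x hx => hf' x ⟨ham.trans_lt hx.1, hx.2.trans_le hcb⟩)
    have hζT : ζ ∉ T := fun h => (hTa h).2.not_gt hζ.1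
    refine ⟨insert ζ T, ?_, ?_, ?_⟩
    · rw [Finset.coe_insert]
      exact insert_subset ⟨ham.trans_lt hζ.1, hζ.2.trans_le hcb⟩
        (hTa.trans (Ioo_subset_Ioo_right (hmc.le.trans hcb)))
    · rw [Finset.card_insert_of_notMem (fun h => (hlt c h).false), Finset.card_insert_of_notMem hζT]
      omega
    · simpa [hζz] using hTz

theorem exists_finset_iterate_hasDerivAt_eq_zero {f : ℕ → ℝ → ℝ} {n : ℕ} {a b : ℝ}
    (hf : ContinuousOn (f 0) (Icc a b))
    (hderiv : ∀ i ≤ n, ∀ x ∈ Ioo a b, HasDerivAt (f i) (f (i + 1) x) x)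
    {S : Finset ℝ} (hS : ↑S ⊆ Icc a b) (hz : ∀ x ∈ S, f 0 x = 0) :
    ∃ T : Finset ℝ, ↑T ⊆ Ioo a b ∧ #S ≤ #T + (n + 1) ∧ ∀ x ∈ T, f (n + 1) x = 0 := by
  induction n with
  | zero => exact exists_finset_hasDerivAt_eq_zero hf (hderiv 0 le_rfl) hS hz
  | succ n ih =>
    obtain ⟨T, hTab, hTcard, hTz⟩ := ih fun i hi => hderiv i (by omega)
    rcases T.eq_empty_or_nonempty with rfl | hne
    · exact ⟨∅, by simp, by simp at hTcard ⊢; omega, by simp⟩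
    -- the zeros of `f (n + 1)` lie inside `(a, b)`, where it is differentiable
    have hsub : Icc (T.min' hne) (T.max' hne) ⊆ Ioo a b := fun y hy =>
      ⟨(hTab (T.min'_mem hne)).1.trans_le hy.1, hy.2.trans_lt (hTab (T.max'_mem hne)).2⟩
    obtain ⟨T', hT'sub, hT'card, hT'z⟩ := exists_finset_hasDerivAt_eq_zero
      (fun y hy => (hderiv (n + 1) le_rfl y (hsub hy)).continuousAt.continuousWithinAt)
      (fun y hy => hderiv (n + 1) le_rfl y (hsub (Ioo_subset_Icc_self hy)))
      (fun y hy => ⟨T.min'_le y hy, T.le_max' y hy⟩) hTz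
    exact ⟨T', hT'sub.trans (Ioo_subset_Icc_self.trans hsub), by omega, hT'z⟩

theorem hasDerivAt_eval_iterate_derivative (P : ℝ[X]) (i : ℕ) (x : ℝ) :
    HasDerivAt (fun y => (derivative^[i] P).eval y) ((derivative^[i + 1] P).eval x) x := by
  rw [Function.iterate_succ_apply']
  exact (derivative^[i] P).hasDerivAt x

theorem abs_le_div_factorial_mul_abs_prod {f : ℕ → ℝ → ℝ} {n : ℕ} {a b K : ℝ}
    (hf : ContinuousOn (f 0) (Icc a b))
    (hderiv : ∀ i ≤ n, ∀ x ∈ Ioo a b, HasDerivAt (f i) (f (i + 1) x) x)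
    (hK : ∀ x ∈ Ioo a b, |f (n + 1) x| ≤ K)
    {S : Finset ℝ} (hS : ↑S ⊆ Icc a b) (hcard : #S = n + 1) (hz : ∀ x ∈ S, f 0 x = 0)
    {x : ℝ} (hx : x ∈ Icc a b) :
    |f 0 x| ≤ K / (n + 1)! * |∏ z ∈ S, (x - z)| := by
  classical
  by_cases hxS : x ∈ S
  · simp [hz x hxS, Finset.prod_eq_zero hxS (sub_self x)]
  set ω : ℝ[X] := ∏ z ∈ S, (X - C z)
  have hωeval : ∀ y, ω.eval y = ∏ z ∈ S, (y - z) := fun y => by simp [ω, eval_prod]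
  have hωx : ω.eval x ≠ 0 := by
    rw [hωeval, Finset.prod_ne_zero_iff]
    exact fun z hz => sub_ne_zero.mpr fun h => hxS (h ▸ hz)
  have hω' : derivative^[n + 1] ω = ((n + 1)! : ℝ[X]) := by
    simp [ω, iterate_derivative_prod_X_sub_C (le_of_eq hcard.symm), hcard]
  -- compare `f 0` with the multiple of `ω` that agrees with it at `x`
  set c := f 0 x / ω.eval x
  obtain ⟨T, hT, hTcard, hTz⟩ := exists_finset_iterate_hasDerivAt_eq_zero
    (f := fun i y => f i y - c * (derivative^[i] ω).eval y) (n := n) (S := insert x S)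
    (hf.sub (continuousOn_const.mul ω.continuousOn))
    (fun i hi y hy => (hderiv i hi y hy).sub
      ((hasDerivAt_eval_iterate_derivative ω i y).const_mul c))
    (by rw [Finset.coe_insert]; exact insert_subset hx hS)
    (by
      simp only [Finset.mem_insert, forall_eq_or_imp, Function.iterate_zero_apply]
      refine ⟨by simp [c, hωx], fun z hzS => ?_⟩
      simp [hz z hzS, hωeval, Finset.prod_eq_zero hzS (sub_self z)])
  rw [Finset.card_insert_of_notMem hxS, hcard] at hTcard
  obtain ⟨ζ, hζ⟩ : T.Nonempty := Finset.card_pos.mp (by omega)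
  have hfζ : f (n + 1) ζ = c * (n + 1)! := by
    have := hTz ζ hζ
    simp only [hω', eval_natCast] at this
    linarith
  have hc : |c| ≤ K / (n + 1)! := by
    rw [le_div_iff₀ (by positivity)]
    simpa [hfζ, abs_mul] using hK ζ (hT hζ)
  calc |f 0 x| = |c| * |∏ z ∈ S, (x - z)| := by
        rw [← hωeval, ← abs_mul, div_mul_cancel₀ _ hωx]
    _ ≤ K / (n + 1)! * |∏ z ∈ S, (x - z)| := by gcongr

-- Only `f 0, f 1, f 2` extend continuously to `[p, q]`: the interpolation error is `C²` across
-- the knots but `C⁴` only inside each piece.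
structure HasDerivChainOn (f : ℕ → ℝ → ℝ) (p q : ℝ) : Prop where
  continuousOn : ∀ i < 3, ContinuousOn (f i) (Icc p q)
  hasDerivAt : ∀ i < 4, ∀ x ∈ Ioo p q, HasDerivAt (f i) (f (i + 1) x) x

namespace HasDerivChainOn

variable {f : ℕ → ℝ → ℝ} {p q K : ℝ}

theorem sub_poly (hf : HasDerivChainOn f p q) (P : ℝ[X]) :
    HasDerivChainOn (fun i y => f i y - (derivative^[i] P).eval y) p q where
  continuousOn i hi := (hf.continuousOn i hi).sub (derivative^[i] P).continuousOn
  hasDerivAt i hi x hx := (hf.hasDerivAt i hi x hx).sub (hasDerivAt_eval_iterate_derivative P i x)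

theorem exists_finset_deriv2_eq_zero_of_double_zeros (hf : HasDerivChainOn f p q) (hpq : p < q)
    (h0p : f 0 p = 0) (h0q : f 0 q = 0) (h1p : f 1 p = 0) (h1q : f 1 q = 0) :
    ∃ T : Finset ℝ, ↑T ⊆ Ioo p q ∧ 2 ≤ #T ∧ ∀ x ∈ T, f 2 x = 0 := by
  obtain ⟨ξ, hξ, hξz⟩ := exists_hasDerivAt_eq_zero hpq (hf.continuousOn 0 (by norm_num))
    (by rw [h0p, h0q]) (hf.hasDerivAt 0 (by norm_num))
  obtain ⟨T, hT, hTcard, hTz⟩ := exists_finset_iterate_hasDerivAt_eq_zero (n := 0)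
    (f := fun i => f (i + 1)) (hf.continuousOn 1 (by norm_num))
    (fun i hi => hf.hasDerivAt (i + 1) (by omega)) (S := {p, ξ, q})
    (by simp [insert_subset_iff, hpq.le, hξ.1.le, hξ.2.le])
    (by simp [hξz, h1p, h1q])
  rw [Finset.card_eq_three.mpr ⟨p, ξ, q, hξ.1.ne, hpq.ne, hξ.2.ne, rfl⟩] at hTcard
  exact ⟨T, hT, by omega, hTz⟩

theorem abs_deriv2_le_of_double_zeros (hf : HasDerivChainOn f p q) (hpq : p < q)
    (hK : ∀ x ∈ Ioo p q, |f 4 x| ≤ K) (h0p : f 0 p = 0) (h0q : f 0 q = 0)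
    (h1p : f 1 p = 0) (h1q : f 1 q = 0) {r : ℝ} (hr : r = p ∨ r = q) :
    |f 2 r| ≤ K * (q - p) ^ 2 / 12 := by
  set W : ℝ[X] := ((X - C p) * (X - C q)) ^ 2
  have hW2 : (derivative^[2] W).eval r = 2 * (q - p) ^ 2 := by
    simp [W, derivative_mul, derivative_pow]
    rcases hr with rfl | rfl <;> ring
  have hW4 : ∀ y, (derivative^[4] W).eval y = 24 := fun y => by
    simp [W, derivative_mul, derivative_pow]
    norm_num
  have hqp : 0 < 2 * (q - p) ^ 2 := by nlinarith
  -- `g` keeps the double zeros at `p` and `q` and, by the choice of `c`, `g 2` vanishes at `r`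
  set c := f 2 r / (2 * (q - p) ^ 2)
  set g := fun i y => f i y - (derivative^[i] (C c * W)).eval y
  have hg : HasDerivChainOn g p q := hf.sub_poly _
  have hgeval : ∀ i y, g i y = f i y - c * (derivative^[i] W).eval y := fun i y => by
    simp [g, iterate_derivative_C_mul]
  obtain ⟨T, hT, hTcard, hTz⟩ := hg.exists_finset_deriv2_eq_zero_of_double_zeros hpq
    (by simp [hgeval, W, h0p]) (by simp [hgeval, W, h0q])
    (by simp [hgeval, W, h1p, derivative_mul, derivative_pow])
    (by simp [hgeval, W, h1q, derivative_mul, derivative_pow])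
  have hrT : r ∉ T := fun h => by rcases hr with rfl | rfl <;> simpa using hT h
  obtain ⟨T', hT', hT'card, hT'z⟩ := exists_finset_iterate_hasDerivAt_eq_zero (n := 1)
    (f := fun i => g (i + 2)) (hg.continuousOn 2 (by norm_num))
    (fun i hi => hg.hasDerivAt (i + 2) (by omega)) (S := insert r T)
    (by
      rw [Finset.coe_insert]
      exact insert_subset (by rcases hr with rfl | rfl <;> simp [hpq.le])
        (hT.trans Ioo_subset_Icc_self))
    (by
      simp only [Finset.mem_insert, forall_eq_or_imp]
      refine ⟨?_, hTz⟩
      show g 2 r = 0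
      rw [hgeval, hW2, div_mul_cancel₀ _ hqp.ne', sub_self])
  rw [Finset.card_insert_of_notMem hrT] at hT'card
  obtain ⟨ζ, hζ⟩ : T'.Nonempty := Finset.card_pos.mp (by omega)
  have hfζ : f 4 ζ = 24 * c := by
    have := hT'z ζ hζ
    simp only [hgeval, hW4] at this
    linarith
  have hc : |c| ≤ K / 24 := by
    have := hK ζ (hT' hζ)
    rw [hfζ, abs_mul] at this
    norm_num at this
    linarith
  calc |f 2 r| = |c| * (2 * (q - p) ^ 2) := by
        rw [← abs_of_pos hqp, ← abs_mul, div_mul_cancel₀ _ hqp.ne']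
    _ ≤ K / 24 * (2 * (q - p) ^ 2) := by gcongr
    _ = K * (q - p) ^ 2 / 12 := by ring

theorem abs_deriv_le_of_double_zeros (hf : HasDerivChainOn f p q) (hpq : p < q)
    (hK : ∀ x ∈ Ioo p q, |f 4 x| ≤ K) (h0p : f 0 p = 0) (h0q : f 0 q = 0)
    (h1p : f 1 p = 0) (h1q : f 1 q = 0) {x : ℝ} (hx : x ∈ Icc p q) :
    |f 1 x| ≤ K * (q - p) ^ 3 / 24 := by
  obtain ⟨ξ, hξ, hξz⟩ := exists_hasDerivAt_eq_zero hpq (hf.continuousOn 0 (by norm_num))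
    (by rw [h0p, h0q]) (hf.hasDerivAt 0 (by norm_num))
  have hK0 : 0 ≤ K := (abs_nonneg _).trans (hK ξ hξ)
  have hcard3 : #{p, ξ, q} = 3 := Finset.card_eq_three.mpr
    ⟨p, ξ, q, hξ.1.ne, hpq.ne, hξ.2.ne, rfl⟩
  have h := abs_le_div_factorial_mul_abs_prod (f := fun i => f (i + 1)) (n := 2)
    (hf.continuousOn 1 (by norm_num)) (fun i hi => hf.hasDerivAt (i + 1) (by omega)) hK
    (by simp [insert_subset_iff, hpq.le, hξ.1.le, hξ.2.le]) hcard3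
    (by simp [hξz, h1p, h1q]) hx
  have hprod : |∏ z ∈ {p, ξ, q}, (x - z)| ≤ (q - p) ^ 3 / 4 := by
    rw [Finset.prod_insert (by simp [hξ.1.ne, hpq.ne]), Finset.prod_pair hξ.2.ne,
      mul_left_comm, abs_mul (x - ξ)]
    have h1 : |x - ξ| ≤ q - p := abs_sub_le_iff.mpr
      ⟨by linarith [hx.2, hξ.1], by linarith [hx.1, hξ.2]⟩
    have h2 : |(x - p) * (x - q)| ≤ (q - p) ^ 2 / 4 := by
      rw [abs_le]; constructor <;> nlinarith [hx.1, hx.2, sq_nonneg (2 * x - p - q)]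
    calc |x - ξ| * |(x - p) * (x - q)| ≤ (q - p) * ((q - p) ^ 2 / 4) := by gcongr
      _ = (q - p) ^ 3 / 4 := by ring
  calc |f 1 x| ≤ K / 3! * |∏ z ∈ {p, ξ, q}, (x - z)| := h
    _ ≤ K / 3! * ((q - p) ^ 3 / 4) := by gcongr
    _ = K * (q - p) ^ 3 / 24 := by simp [Nat.factorial]; ring

end HasDerivChainOn

theorem abs_mul_sub_add_abs_mul_sub_le {u v : ℝ} (hu : 0 ≤ u) (hv : 0 ≤ v) :
    |v * (v - 2 * u)| + |u * (u - 2 * v)| ≤ (u + v) ^ 2 := by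
  rcases le_total (2 * u) v with h | h
  · rw [abs_of_nonneg (by nlinarith), abs_of_nonpos (by nlinarith)]
    nlinarith
  rcases le_total (2 * v) u with h' | h'
  · rw [abs_of_nonpos (by nlinarith), abs_of_nonneg (by nlinarith)]
    nlinarith
  · rw [abs_of_nonpos (by nlinarith), abs_of_nonpos (by nlinarith)]
    nlinarith [sq_nonneg (u - v)]

noncomputable def hermiteCubic (p q mp mq : ℝ) : ℝ[X] :=
  C (mp / (q - p) ^ 2) * (X - C p) * (X - C q) ^ 2 +
    C (mq / (q - p) ^ 2) * (X - C p) ^ 2 * (X - C q)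

section hermiteCubic

variable {p q : ℝ} (mp mq : ℝ)

@[simp]
theorem eval_hermiteCubic_left : (hermiteCubic p q mp mq).eval p = 0 := by
  simp [hermiteCubic]

@[simp]
theorem eval_hermiteCubic_right : (hermiteCubic p q mp mq).eval q = 0 := by
  simp [hermiteCubic]

theorem eval_derivative_hermiteCubic_left (hpq : p ≠ q) :
    (derivative (hermiteCubic p q mp mq)).eval p = mp := by
  have : q - p ≠ 0 := sub_ne_zero.mpr hpq.symm
  simp [hermiteCubic, derivative_mul, derivative_pow]
  field_simp
  ring

theorem eval_derivative_hermiteCubic_right (hpq : p ≠ q) :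
    (derivative (hermiteCubic p q mp mq)).eval q = mq := by
  have : q - p ≠ 0 := sub_ne_zero.mpr hpq.symm
  simp [hermiteCubic, derivative_mul, derivative_pow]
  field_simp

theorem eval_iterate_derivative_two_hermiteCubic_left (hpq : p ≠ q) :
    (derivative^[2] (hermiteCubic p q mp mq)).eval p = -(2 * (2 * mp + mq) / (q - p)) := by
  have : q - p ≠ 0 := sub_ne_zero.mpr hpq.symm
  simp [hermiteCubic, derivative_mul, derivative_pow]
  field_simp
  ring

theorem eval_iterate_derivative_two_hermiteCubic_right (hpq : p ≠ q) :
    (derivative^[2] (hermiteCubic p q mp mq)).eval q = 2 * (mp + 2 * mq) / (q - p) := by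
  have : q - p ≠ 0 := sub_ne_zero.mpr hpq.symm
  simp [hermiteCubic, derivative_mul, derivative_pow]
  field_simp
  ring

@[simp]
theorem iterate_derivative_four_hermiteCubic : derivative^[4] (hermiteCubic p q mp mq) = 0 := by
  refine iterate_derivative_eq_zero (Nat.lt_succ_of_le ?_)
  unfold hermiteCubic
  compute_degree

theorem abs_eval_derivative_hermiteCubic_le (hpq : p < q) {x : ℝ} (hx : x ∈ Icc p q) :
    |(derivative (hermiteCubic p q mp mq)).eval x| ≤ max |mp| |mq| := by
  obtain ⟨u, v, hu, hv, rfl, rfl⟩ : ∃ u v, 0 ≤ u ∧ 0 ≤ v ∧ x - u = p ∧ x + v = q :=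
    ⟨x - p, q - x, sub_nonneg.mpr hx.1, sub_nonneg.mpr hx.2, by ring, by ring⟩
  have huv : 0 < (u + v) ^ 2 := by nlinarith
  have heq : (derivative (hermiteCubic (x - u) (x + v) mp mq)).eval x =
      (mp * (v * (v - 2 * u)) + mq * (u * (u - 2 * v))) / (u + v) ^ 2 := by
    simp [hermiteCubic, derivative_mul, derivative_pow]
    field_simp
    ring
  rw [heq, abs_div, abs_of_pos huv, div_le_iff₀ huv]
  calc |mp * (v * (v - 2 * u)) + mq * (u * (u - 2 * v))|
      ≤ |mp| * |v * (v - 2 * u)| + |mq| * |u * (u - 2 * v)| := by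
        simpa only [abs_mul] using
          abs_add_le (mp * (v * (v - 2 * u))) (mq * (u * (u - 2 * v)))
    _ ≤ max |mp| |mq| * (|v * (v - 2 * u)| + |u * (u - 2 * v)|) := by
        rw [mul_add]; gcongr; exacts [le_max_left _ _, le_max_right _ _]
    _ ≤ max |mp| |mq| * (u + v) ^ 2 := by
        gcongr
        exact abs_mul_sub_add_abs_mul_sub_le hu hv

end hermiteCubic

namespace HasDerivChainOn

variable {f : ℕ → ℝ → ℝ} {p q K : ℝ}

theorem abs_deriv2_left_add_le (hf : HasDerivChainOn f p q) (hpq : p < q)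
    (hK : ∀ x ∈ Ioo p q, |f 4 x| ≤ K) (h0p : f 0 p = 0) (h0q : f 0 q = 0) :
    |f 2 p + 2 * (2 * f 1 p + f 1 q) / (q - p)| ≤ K * (q - p) ^ 2 / 12 := by
  have h := (hf.sub_poly (hermiteCubic p q (f 1 p) (f 1 q))).abs_deriv2_le_of_double_zeros hpq
      (by simpa using hK) (by simp [h0p]) (by simp [h0q])
      (by simp [eval_derivative_hermiteCubic_left _ _ hpq.ne])
      (by simp [eval_derivative_hermiteCubic_right _ _ hpq.ne]) (Or.inl rfl)
  beta_reduce at h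
  rwa [eval_iterate_derivative_two_hermiteCubic_left _ _ hpq.ne, sub_neg_eq_add] at h

theorem abs_deriv2_right_sub_le (hf : HasDerivChainOn f p q) (hpq : p < q)
    (hK : ∀ x ∈ Ioo p q, |f 4 x| ≤ K) (h0p : f 0 p = 0) (h0q : f 0 q = 0) :
    |f 2 q - 2 * (f 1 p + 2 * f 1 q) / (q - p)| ≤ K * (q - p) ^ 2 / 12 := by
  have h := (hf.sub_poly (hermiteCubic p q (f 1 p) (f 1 q))).abs_deriv2_le_of_double_zeros hpq
      (by simpa using hK) (by simp [h0p]) (by simp [h0q])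
      (by simp [eval_derivative_hermiteCubic_left _ _ hpq.ne])
      (by simp [eval_derivative_hermiteCubic_right _ _ hpq.ne]) (Or.inr rfl)
  beta_reduce at h
  rwa [eval_iterate_derivative_two_hermiteCubic_right _ _ hpq.ne] at h

theorem abs_deriv_le_max_add (hf : HasDerivChainOn f p q) (hpq : p < q)
    (hK : ∀ x ∈ Ioo p q, |f 4 x| ≤ K) (h0p : f 0 p = 0) (h0q : f 0 q = 0)
    {x : ℝ} (hx : x ∈ Icc p q) :
    |f 1 x| ≤ max |f 1 p| |f 1 q| + K * (q - p) ^ 3 / 24 := by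
  set H := hermiteCubic p q (f 1 p) (f 1 q)
  have h := (hf.sub_poly H).abs_deriv_le_of_double_zeros hpq
      (by simpa [H] using hK) (by simp [H, h0p]) (by simp [H, h0q])
      (by simp [H, eval_derivative_hermiteCubic_left _ _ hpq.ne])
      (by simp [H, eval_derivative_hermiteCubic_right _ _ hpq.ne]) hx
  simp only [Function.iterate_one] at h
  calc |f 1 x| ≤ |(derivative H).eval x| + |f 1 x - (derivative H).eval x| := by
        linarith [abs_sub_abs_le_abs_sub (f 1 x) ((derivative H).eval x)]
    _ ≤ max |f 1 p| |f 1 q| + K * (q - p) ^ 3 / 24 :=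
        add_le_add (abs_eval_derivative_hermiteCubic_le _ _ hpq hx) h

end HasDerivChainOn

theorem eqOn_iteratedDerivWithin_of_hasDerivAt {e : ℝ → ℝ} {g : ℕ → ℝ → ℝ} {s U : Set ℝ}
    {n : ℕ} (hU : IsOpen U) (hUs : U ⊆ s) (he : EqOn e (g 0) U)
    (hg : ∀ i < n, ∀ x ∈ U, HasDerivAt (g i) (g (i + 1) x) x) :
    ∀ i ≤ n, EqOn (iteratedDerivWithin i e s) (g i) U := by
  intro i hi
  induction i with
  | zero => simpa using he
  | succ i ih =>
    intro x hx
    rw [iteratedDerivWithin_succ,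
      derivWithin_of_mem_nhds (Filter.mem_of_superset (hU.mem_nhds hx) hUs),
      ((ih (by omega)).eventuallyEq_of_mem (hU.mem_nhds hx)).deriv_eq]
    exact (hg i (by omega) x hx).deriv

theorem exists_hasDerivChainOn_of_contDiffOn {e F : ℝ → ℝ} {s : Set ℝ} {p q K : ℝ}
    (hs : UniqueDiffOn ℝ s) (he : ContDiffOn ℝ 2 e s) (hpq : Icc p q ⊆ s)
    (hF : ∀ y ∈ Ioo p q, (∀ i < 4, DifferentiableAt ℝ (deriv^[i] F) y) ∧ |deriv^[4] F y| ≤ K)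
    (hP : ∃ P : ℝ[X], P.degree ≤ 3 ∧ ∀ y ∈ Icc p q, e y = F y - P.eval y) :
    ∃ f : ℕ → ℝ → ℝ, HasDerivChainOn f p q ∧ (∀ y ∈ Ioo p q, |f 4 y| ≤ K) ∧
      ∀ i < 3, f i = iteratedDerivWithin i e s := by
  obtain ⟨P, hPdeg, hP⟩ := hP
  set g : ℕ → ℝ → ℝ := fun i y => deriv^[i] F y - (derivative^[i] P).eval y
  have hg : ∀ i < 4, ∀ y ∈ Ioo p q, HasDerivAt (g i) (g (i + 1) y) y := fun i hi y hy => by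
    have hFi := ((hF y hy).1 i hi).hasDerivAt
    rw [← Function.iterate_succ_apply' deriv] at hFi
    exact hFi.sub (hasDerivAt_eval_iterate_derivative P i y)
  have hderiv := eqOn_iteratedDerivWithin_of_hasDerivAt isOpen_Ioo
    (Ioo_subset_Icc_self.trans hpq) (fun y hy => hP y (Ioo_subset_Icc_self hy)) hg
  -- up to order two use the derivatives within `s`, which are continuous up to `p` and `q`
  set f : ℕ → ℝ → ℝ := fun i => if i < 3 then iteratedDerivWithin i e s else g i
  have hfg : ∀ i ≤ 4, EqOn (f i) (g i) (Ioo p q) := fun i hi y hy => by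
    by_cases h : i < 3
    · simp only [f, if_pos h]; exact hderiv i hi hy
    · simp only [f, if_neg h]
  refine ⟨f, ⟨fun i hi => ?_, fun i hi y hy => ?_⟩, fun y hy => ?_, fun i hi => if_pos hi⟩
  · simp only [f, if_pos hi]
    exact (he.continuousOn_iteratedDerivWithin (by norm_cast; omega) hs).mono hpq
  · rw [hfg (i + 1) (by omega) hy]
    exact (hg i hi y hy).congr_of_eventuallyEq
      ((hfg i (by omega)).eventuallyEq_of_mem (isOpen_Ioo.mem_nhds hy))
  · have hP4 : derivative^[4] P = 0 := iterate_derivative_eq_zero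
      (Nat.lt_succ_of_le (natDegree_le_iff_degree_le.mpr hPdeg))
    simpa [hfg 4 le_rfl hy, g, hP4] using (hF y hy).2

theorem abs_le_of_abs_two_mul_add_div_le {b d h τ K : ℝ} (hK : 0 ≤ K) (hh : 0 < h) (hhτ : h ≤ τ)
    (hd : |d| ≤ |b|) (hbd : |2 * (2 * b + d) / h| ≤ K * h ^ 2 / 12) : |b| ≤ K * τ ^ 3 / 24 := by
  rw [abs_div, abs_mul, abs_two, abs_of_pos hh, div_le_iff₀ hh] at hbd
  have h2b : |2 * b| ≤ |2 * b + d| + |d| := by simpa using abs_add_le (2 * b + d) (-d)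
  rw [abs_mul, abs_two] at h2b
  have hhτ3 : K * h ^ 3 ≤ K * τ ^ 3 := by gcongr
  nlinarith

theorem abs_le_of_abs_sub_div_le_of_abs_add_div_le {a b d r h₁ h₂ τ K : ℝ} (hK : 0 ≤ K)
    (h₁pos : 0 < h₁) (h₂pos : 0 < h₂) (h₁τ : h₁ ≤ τ) (h₂τ : h₂ ≤ τ)
    (ha : |a| ≤ |b|) (hd : |d| ≤ |b|)
    (hr₁ : |r - 2 * (a + 2 * b) / h₁| ≤ K * h₁ ^ 2 / 12)
    (hr₂ : |r + 2 * (2 * b + d) / h₂| ≤ K * h₂ ^ 2 / 12) :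
    |b| ≤ K * τ ^ 3 / 24 := by
  set Z := 2 * h₂ * (a + 2 * b) + 2 * h₁ * (2 * b + d)
  have hupper : |Z| ≤ h₁ * h₂ * (K * h₁ ^ 2 / 12 + K * h₂ ^ 2 / 12) := by
    have hZ : Z = h₁ * h₂ * ((r + 2 * (2 * b + d) / h₂) - (r - 2 * (a + 2 * b) / h₁)) := by
      field_simp
      ring
    rw [hZ, abs_mul, abs_of_pos (by positivity)]
    gcongr
    exact (abs_sub _ _).trans (by linarith)
  have hlower : 4 * (h₁ + h₂) * |b| ≤ |Z| + 2 * h₂ * |a| + 2 * h₁ * |d| := by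
    have hb : 4 * (h₁ + h₂) * b = Z - 2 * h₂ * a - 2 * h₁ * d := by ring
    calc 4 * (h₁ + h₂) * |b| = |Z - 2 * h₂ * a - 2 * h₁ * d| := by
          rw [← hb, abs_mul, abs_of_pos (by positivity : (0 : ℝ) < 4 * (h₁ + h₂))]
      _ ≤ |Z| + |2 * h₂ * a| + |2 * h₁ * d| :=
          (abs_sub _ _).trans (add_le_add_left (abs_sub _ _) _)
      _ = |Z| + 2 * h₂ * |a| + 2 * h₁ * |d| := by
          rw [abs_mul, abs_mul (2 * h₁), abs_of_pos (by positivity : 0 < 2 * h₂),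
            abs_of_pos (by positivity : 0 < 2 * h₁)]
  have hτ' : h₁ * h₂ * (h₁ ^ 2 + h₂ ^ 2) ≤ (h₁ + h₂) * τ ^ 3 := by
    have h1 : h₁ ^ 3 ≤ τ ^ 3 := by gcongr
    have h2 : h₂ ^ 3 ≤ τ ^ 3 := by gcongr
    nlinarith
  have h3 : 2 * (h₁ + h₂) * |b| ≤ 2 * (h₁ + h₂) * (K * τ ^ 3 / 24) := by
    nlinarith [mul_le_mul_of_nonneg_left hτ' hK, mul_le_mul_of_nonneg_left ha h₂pos.le,
      mul_le_mul_of_nonneg_left hd h₁pos.le]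
  exact le_of_mul_le_mul_left h3 (by positivity)

theorem abs_knot_slope_le {n : ℕ} (hn : 1 ≤ n) {t m d : ℕ → ℝ} {K τ : ℝ} (hK : 0 ≤ K)
    (ht : ∀ j < n, t j < t (j + 1)) (hτ : ∀ j < n, t (j + 1) - t j ≤ τ)
    (hd0 : d 0 = 0) (hdn : d n = 0)
    (hleft : ∀ j < n, |d j + 2 * (2 * m j + m (j + 1)) / (t (j + 1) - t j)| ≤
      K * (t (j + 1) - t j) ^ 2 / 12)
    (hright : ∀ j < n, |d (j + 1) - 2 * (m j + 2 * m (j + 1)) / (t (j + 1) - t j)| ≤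
      K * (t (j + 1) - t j) ^ 2 / 12)
    {k : ℕ} (hk : k ≤ n) : |m k| ≤ K * τ ^ 3 / 24 := by
  obtain ⟨k₀, hk₀, hmax⟩ := Finset.exists_max_image (Finset.range (n + 1)) (fun i => |m i|)
    ⟨0, by simp⟩
  have hmax' : ∀ i ≤ n, |m i| ≤ |m k₀| := fun i hi => hmax i (by simp; omega)
  have hk₀n : k₀ ≤ n := by simp at hk₀; omega
  refine (hmax' k hk).trans ?_
  have hh : ∀ j < n, 0 < t (j + 1) - t j := fun j hj => sub_pos.mpr (ht j hj)
  rcases Nat.eq_zero_or_pos k₀ with rfl | hk₀pos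
  · have h0 := hleft 0 hn
    rw [hd0, zero_add] at h0
    exact abs_le_of_abs_two_mul_add_div_le hK (hh 0 hn) (hτ 0 hn) (hmax' 1 hn) h0
  obtain ⟨j, rfl⟩ : ∃ j, k₀ = j + 1 := ⟨k₀ - 1, by omega⟩
  rcases eq_or_lt_of_le hk₀n with hjn | hjn
  · have h1 := hright j (by omega)
    subst hjn
    rw [hdn, zero_sub, abs_neg, add_comm (m j)] at h1
    exact abs_le_of_abs_two_mul_add_div_le hK (hh j (by omega)) (hτ j (by omega))
      (hmax' j (by omega)) h1
  · exact abs_le_of_abs_sub_div_le_of_abs_add_div_le hK (hh j (by omega)) (hh (j + 1) hjn)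
      (hτ j (by omega)) (hτ (j + 1) hjn) (hmax' j (by omega)) (hmax' (j + 2) hjn)
      (hright j (by omega)) (hleft (j + 1) hjn)

theorem exists_mem_Icc_succ_of_mem_Icc {α : Type*} [LinearOrder α] {t : ℕ → α} {n : ℕ}
    (hn : 1 ≤ n) {x : α} (hx : x ∈ Icc (t 0) (t n)) : ∃ j < n, x ∈ Icc (t j) (t (j + 1)) := by
  induction n, hn using Nat.le_induction with
  | base => exact ⟨0, one_pos, hx⟩
  | succ n hn ih =>
    by_cases hxn : x ≤ t n
    · obtain ⟨j, hj, hxj⟩ := ih ⟨hx.1, hxn⟩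
      exact ⟨j, by omega, hxj⟩
    · exact ⟨n, by omega, (not_le.mp hxn).le, hx.2⟩

theorem Icc_subset_Icc_of_lt_succ {α : Type*} [Preorder α] {t : ℕ → α} {n j : ℕ}
    (ht : ∀ i < n, t i < t (i + 1)) (hj : j < n) : Icc (t j) (t (j + 1)) ⊆ Icc (t 0) (t n) :=
  have hmono := (strictMonoOn_Iic_of_lt_succ (ψ := t) fun i hi => by simpa using ht i hi).monotoneOn
  Icc_subset_Icc (hmono (by simp) (by simp; omega) (Nat.zero_le j))
    (hmono (by simp; omega) (by simp) (by omega))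

theorem abs_derivWithin_le_of_hasDerivChainOn {n : ℕ} (hn : 1 ≤ n) {t : ℕ → ℝ} {e : ℝ → ℝ}
    {K τ : ℝ} (hK : 0 ≤ K) (ht : ∀ j < n, t j < t (j + 1)) (hτ : ∀ j < n, t (j + 1) - t j ≤ τ)
    (hpiece : ∀ j < n, ∃ f : ℕ → ℝ → ℝ, HasDerivChainOn f (t j) (t (j + 1)) ∧
      (∀ y ∈ Ioo (t j) (t (j + 1)), |f 4 y| ≤ K) ∧
      ∀ i < 3, f i = iteratedDerivWithin i e (Icc (t 0) (t n)))
    (hknots : ∀ k ≤ n, e (t k) = 0)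
    (hleft : iteratedDerivWithin 2 e (Icc (t 0) (t n)) (t 0) = 0)
    (hright : iteratedDerivWithin 2 e (Icc (t 0) (t n)) (t n) = 0) :
    ∀ x ∈ Icc (t 0) (t n), |derivWithin e (Icc (t 0) (t n)) x| ≤ K * τ ^ 3 / 12 := by
  set S := Icc (t 0) (t n)
  choose! f hf hfK hfe using hpiece
  have hf0 : ∀ j < n, f j 0 (t j) = 0 ∧ f j 0 (t (j + 1)) = 0 := fun j hj => by
    simpa [hfe j hj 0 (by norm_num)] using ⟨hknots j (by omega), hknots (j + 1) hj⟩
  have hslope : ∀ k ≤ n, |derivWithin e S (t k)| ≤ K * τ ^ 3 / 24 := fun k hk => by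
    simpa using abs_knot_slope_le hn hK ht hτ (m := fun k => iteratedDerivWithin 1 e S (t k))
      (d := fun k => iteratedDerivWithin 2 e S (t k)) hleft hright
      (fun j hj => by
        simpa [hfe j hj 1 (by norm_num), hfe j hj 2 (by norm_num)] using
          (hf j hj).abs_deriv2_left_add_le (ht j hj) (hfK j hj) (hf0 j hj).1 (hf0 j hj).2)
      (fun j hj => by
        simpa [hfe j hj 1 (by norm_num), hfe j hj 2 (by norm_num)] using
          (hf j hj).abs_deriv2_right_sub_le (ht j hj) (hfK j hj) (hf0 j hj).1 (hf0 j hj).2)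
      hk
  intro x hx
  obtain ⟨j, hj, hxj⟩ := exists_mem_Icc_succ_of_mem_Icc hn hx
  have hbound := (hf j hj).abs_deriv_le_max_add (ht j hj) (hfK j hj) (hf0 j hj).1
    (hf0 j hj).2 hxj
  rw [hfe j hj 1 (by norm_num), iteratedDerivWithin_one] at hbound
  have hcube : K * (t (j + 1) - t j) ^ 3 ≤ K * τ ^ 3 := by
    have := sub_nonneg.mpr (ht j hj).le
    gcongr
    exact hτ j hj
  calc |derivWithin e S x|
      ≤ max |derivWithin e S (t j)| |derivWithin e S (t (j + 1))| +
          K * (t (j + 1) - t j) ^ 3 / 24 := hbound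
    _ ≤ K * τ ^ 3 / 24 + K * τ ^ 3 / 24 := by
        gcongr
        exact max_le (hslope j (by omega)) (hslope (j + 1) hj)
    _ = K * τ ^ 3 / 12 := by ring

/-- Theorem 2, r = 1 case: interpolation error bound of CSSC. With
`ô = o + c` where `c` is piecewise cubic on the partition, `e = x − ô` is `C²` on `[a,b]`,
`x − o` is four times differentiable with `|(x − o)⁗| ≤ K` on each open subinterval,
`e` vanishes at all knots and satisfies the natural boundary condition, then
`|x'(t) − ô'(t)| ≤ (1/12)·K·τ³` on `[a,b]`. -/
theorem cssc_deriv_error_bound (n : ℕ) (hn : 1 ≤ n) (t : ℕ → ℝ)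
    (ht : ∀ k, 1 ≤ k → k ≤ n → t (k - 1) < t k)
    (τ : ℝ) (hτ : ∀ k, 1 ≤ k → k ≤ n → t k - t (k - 1) ≤ τ)
    (K : ℝ) (hK : 0 ≤ K) (x o c : ℝ → ℝ)
    (hpc : ∀ k, 1 ≤ k → k ≤ n → ∃ p : Polynomial ℝ, p.degree ≤ 3 ∧
      ∀ s ∈ Set.Icc (t (k - 1)) (t k), c s = p.eval s)
    (hC2 : ContDiffOn ℝ 2 (fun s => x s - (o s + c s)) (Set.Icc (t 0) (t n)))
    (hdiff4 : ∀ k, 1 ≤ k → k ≤ n → ∀ s ∈ Set.Ioo (t (k - 1)) (t k),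
      (∀ i < 4, DifferentiableAt ℝ (deriv^[i] (fun r => x r - o r)) s) ∧
        |deriv^[4] (fun r => x r - o r) s| ≤ K)
    (hknots : ∀ k ≤ n, x (t k) - (o (t k) + c (t k)) = 0)
    (hbda : iteratedDerivWithin 2 (fun s => x s - (o s + c s)) (Set.Icc (t 0) (t n)) (t 0) = 0)
    (hbdb : iteratedDerivWithin 2 (fun s => x s - (o s + c s)) (Set.Icc (t 0) (t n)) (t n) = 0) :
    ∀ s ∈ Set.Icc (t 0) (t n),
      |derivWithin (fun r => x r - (o r + c r)) (Set.Icc (t 0) (t n)) s| ≤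
        (1 / 12) * K * τ ^ 3 := by
  have hstep : ∀ j < n, t j < t (j + 1) := fun j hj => by
    simpa using ht (j + 1) (by omega) (by omega)
  have hwidth : ∀ j < n, t (j + 1) - t j ≤ τ := fun j hj => by
    simpa using hτ (j + 1) (by omega) (by omega)
  have hab : t 0 < t n :=
    (hstep 0 hn).trans_le (Icc_subset_Icc_of_lt_succ hstep hn (right_mem_Icc.mpr (hstep 0 hn).le)).2
  refine fun s hs => (abs_derivWithin_le_of_hasDerivChainOn hn hK hstep hwidth (fun j hj => ?_)
    hknots hbda hbdb s hs).trans_eq (by ring)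
  obtain ⟨P, hPdeg, hcP⟩ : ∃ P : ℝ[X], P.degree ≤ 3 ∧ ∀ y ∈ Icc (t j) (t (j + 1)), c y = P.eval y :=
    by simpa using hpc (j + 1) (by omega) (by omega)
  exact exists_hasDerivChainOn_of_contDiffOn (uniqueDiffOn_Icc hab) hC2
    (Icc_subset_Icc_of_lt_succ hstep hj) (by simpa using hdiff4 (j + 1) (by omega) (by omega))
    ⟨P, hPdeg, fun y hy => by simp only [hcP y hy]; ring⟩
end
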